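/- Suppose inf_{x∈ℝ} q(x) > 0 and the equation (r z')' = q z has a PFSS with generating function ρ and associated function s. Then sup_{x∈ℝ} ρ(x) s(x) < ∞, i.e., equation -(r y')' + q y = f is correctly solvable in L_p(ℝ) for every p ∈ (1,∞). -/

import Mathlib

/-!
The Wronskian identity `r (v' u - u' v) = 1` gives `v'/v ≤ 1/(r ρ)` and `-u'/u ≤ 1/(r ρ)`, so on
`[x - s(x), x + s(x)]`, where `1/(r ρ)` has integral `1`, `v` and `u` vary by at most a factor `e`
(on the side where they could be smaller than at `x`). With `σ = inf q`, `(r v')' = q v ≥ σ v`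
and `r v' ≥ 0` give `r v'(x) ≥ σ ∫_{x-s}^x v ≥ σ s v(x) / e`, and symmetrically
`-r u'(x) ≥ σ s u(x) / e`. Plugging both into the Wronskian identity gives `2 σ s(x) ρ(x) ≤ e`.
-/

open MeasureTheory Filter Set intervalIntegral

def IsSol (r q z : ℝ → ℝ) : Prop :=
  Differentiable ℝ z ∧ Differentiable ℝ (fun x => r x * deriv z x) ∧
    ∀ x, deriv (fun y => r y * deriv z y) x = q x * z x

def IsPFSS (r q u v : ℝ → ℝ) : Prop :=
  IsSol r q u ∧ IsSol r q v ∧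
  (∀ x, 0 < u x) ∧ (∀ x, 0 < v x) ∧
  (∀ x, deriv u x ≤ 0) ∧ (∀ x, 0 ≤ deriv v x) ∧
  (∀ x, r x * (deriv v x * u x - deriv u x * v x) = 1) ∧
  Tendsto (fun x => u x / v x) atTop (nhds 0) ∧
  Tendsto (fun x => v x / u x) atBot (nhds 0)

theorem le_exp_integral_mul_of_logDeriv_le {f f' w : ℝ → ℝ} {a b : ℝ} (hab : a ≤ b)
    (hf : ∀ t ∈ Icc a b, HasDerivAt f (f' t) t) (hpos : ∀ t ∈ Icc a b, 0 < f t)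
    (hw : IntervalIntegrable w volume a b) (hle : ∀ t ∈ Ioo a b, f' t / f t ≤ w t) :
    f b ≤ Real.exp (∫ t in a..b, w t) * f a := by
  have hlog : ∀ t ∈ Icc a b, HasDerivAt (fun t => Real.log (f t)) (f' t / f t) t :=
    fun t ht => (hf t ht).log (hpos t ht).ne'
  have key : Real.log (f b) - Real.log (f a) ≤ ∫ t in a..b, w t :=
    sub_le_integral_of_hasDeriv_right_of_le hab
      (fun t ht => (hlog t ht).continuousAt.continuousWithinAt)
      (fun t ht => (hlog t (Ioo_subset_Icc_self ht)).hasDerivWithinAt)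
      ((intervalIntegrable_iff_integrableOn_Icc_of_le hab).mp hw) hle
  calc f b = Real.exp (Real.log (f b)) := (Real.exp_log (hpos b ⟨hab, le_rfl⟩)).symm
    _ ≤ Real.exp ((∫ t in a..b, w t) + Real.log (f a)) := Real.exp_le_exp.mpr (by linarith)
    _ = Real.exp (∫ t in a..b, w t) * f a := by
      rw [Real.exp_add, Real.exp_log (hpos a ⟨le_rfl, hab⟩)]

theorem le_exp_integral_mul_of_neg_logDeriv_le {f f' w : ℝ → ℝ} {a b : ℝ} (hab : a ≤ b)
    (hf : ∀ t ∈ Icc a b, HasDerivAt f (f' t) t) (hpos : ∀ t ∈ Icc a b, 0 < f t)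
    (hw : IntervalIntegrable w volume a b) (hle : ∀ t ∈ Ioo a b, -f' t / f t ≤ w t) :
    f a ≤ Real.exp (∫ t in a..b, w t) * f b := by
  have ha := hpos a ⟨le_rfl, hab⟩
  have hb := hpos b ⟨hab, le_rfl⟩
  have key := le_exp_integral_mul_of_logDeriv_le hab (fun t ht => (hf t ht).inv (hpos t ht).ne')
    (fun t ht => inv_pos.mpr (hpos t ht)) hw fun t ht => by
      have := (hpos t (Ioo_subset_Icc_self ht)).ne'
      convert hle t ht using 1
      simp only [Pi.inv_apply]
      field_simp
  simp only [Pi.inv_apply] at key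
  rw [← div_eq_mul_inv, inv_le_iff_one_le_mul₀ hb, div_mul_eq_mul_div, one_le_div ha] at key
  exact key

theorem IsSol.hasDerivAt_flux {r q z : ℝ → ℝ} (h : IsSol r q z) (x : ℝ) :
    HasDerivAt (fun y => r y * deriv z y) (q x * z x) x := by
  simpa only [h.2.2 x] using (h.2.1 x).hasDerivAt

namespace IsPFSS

variable {r q u v : ℝ → ℝ}

theorem isSol_u (h : IsPFSS r q u v) : IsSol r q u := h.1

theorem isSol_v (h : IsPFSS r q u v) : IsSol r q v := h.2.1

theorem u_pos (h : IsPFSS r q u v) (x : ℝ) : 0 < u x := h.2.2.1 x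

theorem v_pos (h : IsPFSS r q u v) (x : ℝ) : 0 < v x := h.2.2.2.1 x

theorem deriv_u_nonpos (h : IsPFSS r q u v) (x : ℝ) : deriv u x ≤ 0 := h.2.2.2.2.1 x

theorem deriv_v_nonneg (h : IsPFSS r q u v) (x : ℝ) : 0 ≤ deriv v x := h.2.2.2.2.2.1 x

theorem wronskian_eq (h : IsPFSS r q u v) (x : ℝ) :
    r x * (deriv v x * u x - deriv u x * v x) = 1 :=
  h.2.2.2.2.2.2.1 x

theorem wronskian_pos (h : IsPFSS r q u v) (x : ℝ) : 0 < deriv v x * u x - deriv u x * v x := by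
  obtain ⟨-, -, hu, hv, hu', hv', hW, -, -⟩ := h
  refine (sub_nonneg.mpr ?_).lt_of_ne fun h0 => by simpa [← h0] using hW x
  nlinarith [hu x, hv x, hu' x, hv' x]

theorem r_pos (h : IsPFSS r q u v) (x : ℝ) : 0 < r x :=
  pos_of_mul_pos_left (h.wronskian_eq x ▸ one_pos) (h.wronskian_pos x).le

theorem logDeriv_v_le (h : IsPFSS r q u v) (x : ℝ) :
    deriv v x / v x ≤ 1 / (r x * (u x * v x)) := by
  have hr := h.r_pos x
  obtain ⟨-, -, hu, hv, hu', -, hW, -, -⟩ := h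
  have hflux : r x * deriv v x * u x ≤ 1 := by
    nlinarith [hW x, mul_nonneg (mul_nonneg hr.le (neg_nonneg.mpr (hu' x))) (hv x).le]
  have := hu x; have := hv x
  rw [div_le_div_iff₀ (hv x) (by positivity)]
  nlinarith [mul_le_mul_of_nonneg_right hflux (hv x).le]

theorem neg_logDeriv_u_le (h : IsPFSS r q u v) (x : ℝ) :
    -deriv u x / u x ≤ 1 / (r x * (u x * v x)) := by
  have hr := h.r_pos x
  obtain ⟨-, -, hu, hv, -, hv', hW, -, -⟩ := h
  have hflux : -(r x * deriv u x) * v x ≤ 1 := by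
    nlinarith [hW x, mul_nonneg (mul_nonneg hr.le (hv' x)) (hu x).le]
  have := hu x; have := hv x
  rw [div_le_div_iff₀ (hu x) (by positivity)]
  nlinarith [mul_le_mul_of_nonneg_right hflux (hu x).le]

theorem weight_pos (h : IsPFSS r q u v) (x : ℝ) : 0 < 1 / (r x * (u x * v x)) := by
  have := h.r_pos x; have := h.u_pos x; have := h.v_pos x
  positivity

theorem integral_weight_le {a b c d : ℝ} (h : IsPFSS r q u v)
    (hw : IntervalIntegrable (fun y => 1 / (r y * (u y * v y))) volume a b)
    (hI : ∫ y in a..b, 1 / (r y * (u y * v y)) ≤ 1) (hac : a ≤ c) (hcd : c ≤ d) (hdb : d ≤ b) :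
    ∫ y in c..d, 1 / (r y * (u y * v y)) ≤ 1 :=
  (integral_mono_interval hac hcd hdb (.of_forall fun y => (h.weight_pos y).le) hw).trans hI

theorem v_le_exp_mul (h : IsPFSS r q u v) {a b t x : ℝ}
    (hw : IntervalIntegrable (fun y => 1 / (r y * (u y * v y))) volume a b)
    (hI : ∫ y in a..b, 1 / (r y * (u y * v y)) ≤ 1) (hat : a ≤ t) (htx : t ≤ x) (hxb : x ≤ b) :
    v x ≤ Real.exp 1 * v t :=
  calc v x ≤ Real.exp (∫ y in t..x, 1 / (r y * (u y * v y))) * v t :=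
        le_exp_integral_mul_of_logDeriv_le htx (fun y _ => (h.isSol_v.1 y).hasDerivAt)
          (fun y _ => h.v_pos y)
          (hw.mono_set <| uIcc_subset_uIcc (mem_uIcc_of_le hat (htx.trans hxb))
            (mem_uIcc_of_le (hat.trans htx) hxb))
          fun y _ => h.logDeriv_v_le y
    _ ≤ Real.exp 1 * v t := by
      gcongr
      · exact (h.v_pos t).le
      · exact h.integral_weight_le hw hI hat htx hxb

theorem u_le_exp_mul (h : IsPFSS r q u v) {a b t x : ℝ}
    (hw : IntervalIntegrable (fun y => 1 / (r y * (u y * v y))) volume a b)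
    (hI : ∫ y in a..b, 1 / (r y * (u y * v y)) ≤ 1) (hax : a ≤ x) (hxt : x ≤ t) (htb : t ≤ b) :
    u x ≤ Real.exp 1 * u t :=
  calc u x ≤ Real.exp (∫ y in x..t, 1 / (r y * (u y * v y))) * u t :=
        le_exp_integral_mul_of_neg_logDeriv_le hxt (fun y _ => (h.isSol_u.1 y).hasDerivAt)
          (fun y _ => h.u_pos y)
          (hw.mono_set <| uIcc_subset_uIcc (mem_uIcc_of_le hax (hxt.trans htb))
            (mem_uIcc_of_le (hax.trans hxt) htb))
          fun y _ => h.neg_logDeriv_u_le y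
    _ ≤ Real.exp 1 * u t := by
      gcongr
      · exact (h.u_pos t).le
      · exact h.integral_weight_le hw hI hax hxt htb

theorem integral_v_le_flux (h : IsPFSS r q u v) {σ a x : ℝ} (hσ : ∀ t, σ ≤ q t) (hax : a ≤ x) :
    σ * ∫ t in a..x, v t ≤ r x * deriv v x := by
  have hv := h.isSol_v
  have hgrowth := integral_le_sub_of_hasDeriv_right_of_le (φ := fun t => σ * v t) hax
    hv.2.1.continuous.continuousOn (fun t _ => (hv.hasDerivAt_flux t).hasDerivWithinAt)
    (continuous_const.mul hv.1.continuous).integrableOn_Icc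
    fun t _ => mul_le_mul_of_nonneg_right (hσ t) (h.v_pos t).le
  rw [intervalIntegral.integral_const_mul] at hgrowth
  linarith [mul_nonneg (h.r_pos a).le (h.deriv_v_nonneg a)]

theorem integral_u_le_neg_flux (h : IsPFSS r q u v) {σ x b : ℝ} (hσ : ∀ t, σ ≤ q t)
    (hxb : x ≤ b) : σ * ∫ t in x..b, u t ≤ -(r x * deriv u x) := by
  have hu := h.isSol_u
  have hgrowth := integral_le_sub_of_hasDeriv_right_of_le (φ := fun t => σ * u t) hxb
    hu.2.1.continuous.continuousOn (fun t _ => (hu.hasDerivAt_flux t).hasDerivWithinAt)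
    (continuous_const.mul hu.1.continuous).integrableOn_Icc
    fun t _ => mul_le_mul_of_nonneg_right (hσ t) (h.u_pos t).le
  rw [intervalIntegral.integral_const_mul] at hgrowth
  linarith [mul_nonpos_of_nonneg_of_nonpos (h.r_pos b).le (h.deriv_u_nonpos b)]

theorem two_mul_mul_le_exp_one (h : IsPFSS r q u v) {σ x s : ℝ} (hσ₀ : 0 ≤ σ)
    (hσ : ∀ t, σ ≤ q t) (hs : 0 ≤ s)
    (hw : IntervalIntegrable (fun y => 1 / (r y * (u y * v y))) volume (x - s) (x + s))
    (hI : ∫ y in (x - s)..(x + s), 1 / (r y * (u y * v y)) ≤ 1) :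
    2 * σ * (u x * v x * s) ≤ Real.exp 1 := by
  have hax : x - s ≤ x := by linarith
  have hxb : x ≤ x + s := by linarith
  have hv_int : s * v x ≤ Real.exp 1 * ∫ t in (x - s)..x, v t := by
    have := integral_mono_on (μ := volume) hax _root_.intervalIntegrable_const
      ((h.isSol_v.1.continuous.intervalIntegrable _ _).const_mul (Real.exp 1))
      fun t ht => h.v_le_exp_mul hw hI ht.1 ht.2 hxb
    simpa only [intervalIntegral.integral_const, intervalIntegral.integral_const_mul, sub_sub_cancel,
      smul_eq_mul] using this
  have hu_int : s * u x ≤ Real.exp 1 * ∫ t in x..(x + s), u t := by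
    have := integral_mono_on (μ := volume) hxb _root_.intervalIntegrable_const
      ((h.isSol_u.1.continuous.intervalIntegrable _ _).const_mul (Real.exp 1))
      fun t ht => h.u_le_exp_mul hw hI hax ht.1 ht.2
    simpa only [intervalIntegral.integral_const, intervalIntegral.integral_const_mul,
      add_sub_cancel_left, smul_eq_mul] using this
  have hv_flux : σ * (s * v x) ≤ Real.exp 1 * (r x * deriv v x) :=
    calc σ * (s * v x) ≤ σ * (Real.exp 1 * ∫ t in (x - s)..x, v t) := by gcongr
      _ = Real.exp 1 * (σ * ∫ t in (x - s)..x, v t) := by ring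
      _ ≤ Real.exp 1 * (r x * deriv v x) :=
        mul_le_mul_of_nonneg_left (h.integral_v_le_flux hσ hax) (Real.exp_pos 1).le
  have hu_flux : σ * (s * u x) ≤ Real.exp 1 * -(r x * deriv u x) :=
    calc σ * (s * u x) ≤ σ * (Real.exp 1 * ∫ t in x..(x + s), u t) := by gcongr
      _ = Real.exp 1 * (σ * ∫ t in x..(x + s), u t) := by ring
      _ ≤ Real.exp 1 * -(r x * deriv u x) :=
        mul_le_mul_of_nonneg_left (h.integral_u_le_neg_flux hσ hxb) (Real.exp_pos 1).le
  have hW : Real.exp 1 * (r x * (deriv v x * u x - deriv u x * v x)) = Real.exp 1 := by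
    rw [h.wronskian_eq x, mul_one]
  linarith [mul_le_mul_of_nonneg_left hv_flux (h.u_pos x).le,
    mul_le_mul_of_nonneg_left hu_flux (h.v_pos x).le]

end IsPFSS

theorem stmt12 (r q u v ρ s : ℝ → ℝ) (h : IsPFSS r q u v)
    (hρ : ∀ x, ρ x = u x * v x)
    (hs : ∀ x, 0 < s x ∧ (∫ t in (x - s x)..(x + s x), 1 / (r t * ρ t)) = 1)
    (hq : 0 < ⨅ x, q x) :
    ∃ C : ℝ, ∀ x, ρ x * s x ≤ C := by
  have hbdd : BddBelow (range q) := by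
    by_contra hb
    exact hq.ne' (Real.iInf_of_not_bddBelow hb)
  refine ⟨Real.exp 1 / (2 * ⨅ x, q x), fun x => ?_⟩
  obtain ⟨hsx, hI⟩ := hs x
  simp only [hρ] at hI ⊢
  have hw := intervalIntegrable_of_integral_ne_zero (hI ▸ one_ne_zero)
  have key := h.two_mul_mul_le_exp_one hq.le (ciInf_le hbdd) hsx.le hw hI.le
  rw [le_div_iff₀ (by positivity)]
  linarith
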